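/- On the domain D = { (a,s) : φ_a(s) < +∞ }, the partial derivative ∂φ_a(s)/∂s is strictly positive. -/

import Mathlib

open Set

/-- `u c s` is the solution of `-(p·u')' + q·u = c·w·u` with `u c s s = 0` and
`(u c s)' s = 1/(p s)`; `u'` is its `t`-derivative. -/
def IsSolFamily (p q w : ℝ → ℝ) (u u' : ℝ → ℝ → ℝ → ℝ) : Prop :=
  ∀ c s : ℝ, u c s s = 0 ∧ u' c s s = 1 / p s ∧
    ∀ t : ℝ, HasDerivAt (u c s) (u' c s t) t ∧
      HasDerivAt (fun τ => p τ * u' c s τ) (q t * u c s t - c * w t * u c s t) t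

/-- Zero set of `u c s` strictly after `s`. -/
def zeroSet (u : ℝ → ℝ → ℝ → ℝ) (c s : ℝ) : Set ℝ := {t | s < t ∧ u c s t = 0}

/-!
Let `T = φ_a(s)`. The Wronskian of `u(·;a,s)` and `u(·;a,σ)` is constant, equal to
`-u(σ;a,s)`. Evaluated at `T` it gives `u(T;a,σ) = κ · u(σ;a,s)` with
`κ = -1/(p(T) u'(T;a,s)) > 0`; evaluated at `φ_a(σ)` it shows `φ_a(σ) > T` for `σ` slightly
larger than `s`. Since `u(·;a,σ)` falls from `u(T;a,σ) ≈ κ (σ - s)/p(s)` to `0` on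
`[T, φ_a(σ)]` with slope bounded uniformly in `σ`, we get `φ_a(σ) - T ≥ k (σ - s)` for some
`k > 0`, which bounds the derivative below by `k`.
-/

open Filter Topology

section Slope

variable {f : ℝ → ℝ} {x L : ℝ}

lemma HasDerivAt.tendsto_slope_nhdsGT (hf : HasDerivAt f L x) :
    Tendsto (slope f x) (𝓝[>] x) (𝓝 L) :=
  (hasDerivAt_iff_tendsto_slope.1 hf).mono_left (nhdsGT_le_nhdsNE x)

lemma HasDerivAt.eventually_mul_sub_lt {l : ℝ} (hf : HasDerivAt f L x) (hl : l < L) :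
    ∀ᶠ t in 𝓝[>] x, l * (t - x) < f t - f x := by
  filter_upwards [hf.tendsto_slope_nhdsGT.eventually (eventually_gt_nhds hl),
    self_mem_nhdsWithin] with t ht hxt
  rwa [slope_def_field, lt_div_iff₀ (sub_pos.2 hxt)] at ht

lemma HasDerivAt.eventually_sub_lt_mul {l : ℝ} (hf : HasDerivAt f L x) (hl : L < l) :
    ∀ᶠ t in 𝓝[>] x, f t - f x < l * (t - x) := by
  filter_upwards [hf.neg.eventually_mul_sub_lt (neg_lt_neg hl)] with t ht
  simp only [Pi.neg_apply] at ht
  linarith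

lemma HasDerivAt.le_of_eventually_mul_sub_le {l : ℝ} (hf : HasDerivAt f L x)
    (h : ∀ᶠ t in 𝓝[>] x, l * (t - x) ≤ f t - f x) : l ≤ L := by
  refine ge_of_tendsto hf.tendsto_slope_nhdsGT ?_
  filter_upwards [h, self_mem_nhdsWithin] with t ht hxt
  rwa [slope_def_field, le_div_iff₀ (sub_pos.2 hxt)]

lemma HasDerivAt.nonpos_of_pos_on_Ioo {a : ℝ} (hax : a < x) (hf : HasDerivAt f L x)
    (hfx : f x = 0) (hpos : ∀ t ∈ Ioo a x, 0 < f t) : L ≤ 0 := by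
  refine le_of_tendsto ((hasDerivAt_iff_tendsto_slope.1 hf).mono_left (nhdsLT_le_nhdsNE x)) ?_
  filter_upwards [Ioo_mem_nhdsLT hax] with t ht
  rw [slope_def_field, hfx, sub_zero]
  exact div_nonpos_of_nonneg_of_nonpos (hpos t ht).le (by linarith [ht.2])

lemma sInf_zeros_gt_spec (hcont : Continuous f) (hf : HasDerivAt f L x) (hfx : f x = 0)
    (hL : 0 < L) (hne : {t | x < t ∧ f t = 0}.Nonempty) :
    x < sInf {t | x < t ∧ f t = 0} ∧ f (sInf {t | x < t ∧ f t = 0}) = 0 ∧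
      ∀ t ∈ Ioo x (sInf {t | x < t ∧ f t = 0}), 0 < f t := by
  set S := {t | x < t ∧ f t = 0}
  have hbdd : BddBelow S := ⟨x, fun z hz => hz.1.le⟩
  obtain ⟨c, hxc, hposc⟩ : ∃ c ∈ Ioi x, Ioc x c ⊆ {t | 0 < f t} := by
    refine mem_nhdsGT_iff_exists_Ioc_subset.1 ?_
    filter_upwards [hf.eventually_mul_sub_lt hL] with t ht
    simpa [hfx] using ht
  have hcS : c ≤ sInf S :=
    le_csInf hne fun z hz => not_lt.1 fun hzc => (hposc ⟨hz.1, hzc.le⟩).ne' hz.2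
  have hzero : f (sInf S) = 0 :=
    closure_minimal (fun t ht => ht.2) (isClosed_singleton.preimage hcont)
      (csInf_mem_closure hne hbdd)
  refine ⟨lt_of_lt_of_le hxc hcS, hzero, fun t ht => ?_⟩
  have hne0 : ∀ r ∈ Ioo x (sInf S), f r ≠ 0 := fun r hr h0 =>
    (csInf_le hbdd ⟨hr.1, h0⟩).not_gt hr.2
  rcases le_total t c with htc | hct
  · exact hposc ⟨ht.1, htc⟩
  · by_contra hneg
    obtain ⟨r, hr, hr0⟩ := intermediate_value_Icc' hct hcont.continuousOn
      ⟨not_lt.1 hneg, (hposc ⟨hxc, le_rfl⟩).le⟩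
    exact hne0 r ⟨hxc.trans_le hr.1, hr.2.trans_lt ht.2⟩ hr0

end Slope

namespace IsSolFamily

variable {p q w : ℝ → ℝ} {u u' : ℝ → ℝ → ℝ → ℝ}

lemma continuous (hsol : IsSolFamily p q w u u') (c s : ℝ) : Continuous (u c s) :=
  continuous_iff_continuousAt.2 fun t => ((hsol c s).2.2 t).1.continuousAt

lemma wronskian_eq (hsol : IsSolFamily p q w u u') {σ : ℝ} (hpσ : p σ ≠ 0) (c s t : ℝ) :
    p t * u' c s t * u c σ t - u c s t * (p t * u' c σ t) = -u c s σ := by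
  set W : ℝ → ℝ := fun τ => p τ * u' c s τ * u c σ τ - u c s τ * (p τ * u' c σ τ)
  have hW : ∀ τ, HasDerivAt W 0 τ := fun τ =>
    ((((hsol c s).2.2 τ).2.mul ((hsol c σ).2.2 τ).1).sub
      (((hsol c s).2.2 τ).1.mul ((hsol c σ).2.2 τ).2)).congr_deriv (by ring)
  have hconst : W t = W σ :=
    is_const_of_deriv_eq_zero (fun τ => (hW τ).differentiableAt) (fun τ => (hW τ).deriv) t σ
  simp only [W, (hsol c σ).1, (hsol c σ).2.1] at hconst
  rw [hconst]
  field_simp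
  ring

lemma sInf_zeroSet_spec (hsol : IsSolFamily p q w u u') {c s : ℝ} (hps : 0 < p s)
    (hne : (zeroSet u c s).Nonempty) :
    s < sInf (zeroSet u c s) ∧ u c s (sInf (zeroSet u c s)) = 0 ∧
      ∀ t ∈ Ioo s (sInf (zeroSet u c s)), 0 < u c s t :=
  sInf_zeros_gt_spec (hsol.continuous c s) ((hsol c s).2.2 s).1 (hsol c s).1
    (by rw [(hsol c s).2.1]; exact one_div_pos.2 hps) hne

lemma deriv_sInf_zeroSet_neg (hsol : IsSolFamily p q w u u') (hppos : ∀ t, 0 < p t) {c s : ℝ}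
    (hne : (zeroSet u c s).Nonempty) :
    u' c s (sInf (zeroSet u c s)) < 0 := by
  obtain ⟨hsT, hT0, hpos⟩ := hsol.sInf_zeroSet_spec (hppos s) hne
  set T := sInf (zeroSet u c s)
  have hW := hsol.wronskian_eq (hppos ((s + T) / 2)).ne' c s T
  have hmid : 0 < u c s ((s + T) / 2) := hpos _ ⟨by linarith, by linarith⟩
  refine (((hsol c s).2.2 T).1.nonpos_of_pos_on_Ioo hsT hT0 hpos).lt_of_ne fun h0 => ?_
  rw [hT0, h0] at hW
  linarith [hW]

/-- Sturm separation: a zero of `u c σ` would otherwise be a point where `u c s < 0`. -/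
lemma sInf_zeroSet_lt (hsol : IsSolFamily p q w u u') (hppos : ∀ t, 0 < p t) {c s σ : ℝ}
    (hne : (zeroSet u c s).Nonempty)
    (hσ : σ ∈ Ioo s (sInf (zeroSet u c s))) (hneσ : (zeroSet u c σ).Nonempty) :
    sInf (zeroSet u c s) < sInf (zeroSet u c σ) := by
  obtain ⟨-, hT0, hpos⟩ := hsol.sInf_zeroSet_spec (hppos s) hne
  obtain ⟨hσφ, hφ0, hposσ⟩ := hsol.sInf_zeroSet_spec (hppos σ) hneσ
  set φ := sInf (zeroSet u c σ)
  have hderiv := ((hsol c σ).2.2 φ).1.nonpos_of_pos_on_Ioo hσφ hφ0 hposσ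
  have hW := hsol.wronskian_eq (hppos σ).ne' c s φ
  rw [hφ0, mul_zero, zero_sub, neg_inj] at hW
  have hneg : u c s φ < 0 := by
    by_contra! h
    have := mul_nonpos_of_nonneg_of_nonpos (mul_nonneg h (hppos φ).le) hderiv
    linarith [hpos σ hσ, mul_assoc (u c s φ) (p φ) (u' c σ φ)]
  by_contra! hle
  rcases hle.lt_or_eq with hlt | heq
  · exact (hpos φ ⟨hσ.1.trans hσφ, hlt⟩).not_gt hneg
  · exact hneg.ne (heq ▸ hT0)

lemma apply_le_mul_sInf_zeroSet_sub (hsol : IsSolFamily p q w u u') (hppos : ∀ t, 0 < p t)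
    {c s σ t₀ M : ℝ} (hne : (zeroSet u c s).Nonempty) (hσ : σ ∈ Ioo s (sInf (zeroSet u c s)))
    (hσT : 0 < u c σ (sInf (zeroSet u c s))) (hTt₀ : sInf (zeroSet u c s) ≤ t₀)
    (ht₀ : u c σ t₀ < 0) (hM : ∀ t ∈ Icc (sInf (zeroSet u c s)) t₀, ‖u' c σ t‖ ≤ M) :
    u c σ (sInf (zeroSet u c s)) ≤ M * (sInf (zeroSet u c σ) - sInf (zeroSet u c s)) := by
  set T := sInf (zeroSet u c s)
  obtain ⟨r, hr, hr0⟩ := intermediate_value_Icc' hTt₀ (hsol.continuous c σ).continuousOn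
    ⟨ht₀.le, hσT.le⟩
  have hrσ : r ∈ zeroSet u c σ := ⟨hσ.2.trans_le hr.1, hr0⟩
  have hφT := hsol.sInf_zeroSet_lt hppos hne hσ ⟨r, hrσ⟩
  set φ := sInf (zeroSet u c σ)
  have hφt₀ : φ ≤ t₀ := (csInf_le ⟨σ, fun z hz => hz.1.le⟩ hrσ).trans hr.2
  have hφ0 := (hsol.sInf_zeroSet_spec (hppos σ) ⟨r, hrσ⟩).2.1
  have hmvt := norm_image_sub_le_of_norm_deriv_le_segment' (f := u c σ) (a := T) (b := φ)
    (fun t _ => ((hsol c σ).2.2 t).1.hasDerivWithinAt)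
    (fun t ht => hM t ⟨ht.1, ht.2.le.trans hφt₀⟩) φ ⟨hφT.le, le_rfl⟩
  rwa [hφ0, zero_sub, norm_neg, Real.norm_of_nonneg hσT.le] at hmvt

lemma exists_eventually_mul_sub_le_sInf_zeroSet (hsol : IsSolFamily p q w u u')
    (hppos : ∀ t, 0 < p t)
    (hu : Continuous fun x : ℝ × ℝ × ℝ => u x.1 x.2.1 x.2.2)
    (hu' : Continuous fun x : ℝ × ℝ × ℝ => u' x.1 x.2.1 x.2.2)
    {c s : ℝ} (hne : (zeroSet u c s).Nonempty) :
    ∃ k > 0, ∀ᶠ σ in 𝓝[>] s,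
      k * (σ - s) ≤ sInf (zeroSet u c σ) - sInf (zeroSet u c s) := by
  obtain ⟨hsT, hT0, hpos⟩ := hsol.sInf_zeroSet_spec (hppos s) hne
  have hdT := hsol.deriv_sInf_zeroSet_neg hppos hne
  set T := sInf (zeroSet u c s)
  obtain ⟨t₀, ht₀, hTt₀⟩ : ∃ t₀, u c s t₀ < 0 ∧ T < t₀ := by
    refine ((((hsol c s).2.2 T).1.eventually_sub_lt_mul (l := 0) hdT).and
      self_mem_nhdsWithin).exists.imp fun t ht => ⟨?_, ht.2⟩
    simpa [hT0] using ht.1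
  obtain ⟨M, hM⟩ := (isCompact_Icc.prod isCompact_Icc).exists_bound_of_continuousOn
    (s := Icc s T ×ˢ Icc T t₀) (f := fun x : ℝ × ℝ => u' c x.1 x.2)
    (hu'.comp (continuous_const.prodMk (continuous_fst.prodMk continuous_snd))).continuousOn
  have hMpos : 0 < M := (abs_pos.2 hdT.ne).trans_le
    (hM (s, T) ⟨⟨le_rfl, hsT.le⟩, ⟨le_rfl, hTt₀.le⟩⟩)
  set κ := -1 / (p T * u' c s T)
  have hκ : 0 < κ := div_pos_of_neg_of_neg (by norm_num) (mul_neg_of_pos_of_neg (hppos T) hdT)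
  -- the Wronskian of `u c s` and `u c σ`, evaluated at `T`
  have huT : ∀ σ, u c σ T = κ * u c s σ := fun σ => by
    have hW := hsol.wronskian_eq (hppos σ).ne' c s T
    rw [hT0, zero_mul, sub_zero] at hW
    have : p T * u' c s T ≠ 0 := (mul_neg_of_pos_of_neg (hppos T) hdT).ne
    rw [div_mul_eq_mul_div, eq_div_iff this]
    linarith
  have hlow : ∀ᶠ σ in 𝓝[>] s, 1 / (2 * p s) * (σ - s) < u c s σ := by
    have hps := hppos s
    have := ((hsol c s).2.2 s).1.eventually_mul_sub_lt (l := 1 / (2 * p s))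
      (by rw [(hsol c s).2.1]; gcongr; linarith)
    simpa only [(hsol c s).1, sub_zero] using this
  have ht₀σ : ∀ᶠ σ in 𝓝[>] s, u c σ t₀ < 0 :=
    ((hu.comp (continuous_const.prodMk (continuous_id.prodMk continuous_const))).tendsto s
      |>.eventually (eventually_lt_nhds ht₀)).filter_mono nhdsWithin_le_nhds
  refine ⟨κ * (1 / (2 * p s)) / M,
    div_pos (mul_pos hκ (by have := hppos s; positivity)) hMpos, ?_⟩
  filter_upwards [Ioo_mem_nhdsGT hsT, hlow, ht₀σ] with σ hσ hσlow hσt₀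
  have hσT : 0 < u c σ T := by rw [huT]; exact mul_pos hκ (hpos σ hσ)
  have hmvt := hsol.apply_le_mul_sInf_zeroSet_sub hppos hne hσ hσT hTt₀.le hσt₀
    fun t ht => hM (σ, t) ⟨⟨hσ.1.le, hσ.2.le⟩, ht⟩
  rw [huT] at hmvt
  rw [div_mul_eq_mul_div, div_le_iff₀ hMpos]
  nlinarith [mul_lt_mul_of_pos_left hσlow hκ]

end IsSolFamily

theorem zero_function_partial_s_pos_general
    (p q m : ℝ → ℝ) (u u' : ℝ → ℝ → ℝ → ℝ)
    (hppos : ∀ t, 0 < p t)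
    (hsol : IsSolFamily p q m u u')
    (hu : Continuous fun x : ℝ × ℝ × ℝ => u x.1 x.2.1 x.2.2)
    (hu' : Continuous fun x : ℝ × ℝ × ℝ => u' x.1 x.2.1 x.2.2) :
    ∀ a s : ℝ, (zeroSet u a s).Nonempty →
      ∀ d : ℝ, HasDerivAt (fun σ => sInf (zeroSet u a σ)) d s → 0 < d := by
  intro a s hne d hd
  obtain ⟨k, hk, hslope⟩ := hsol.exists_eventually_mul_sub_le_sInf_zeroSet hppos hu hu' hne
  exact hk.trans_le (hd.le_of_eventually_mul_sub_le hslope)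

/-- On the domain `D = {(a,s) : φ_a(s) < +∞}` the partial
derivative `∂φ_a(s)/∂s` is strictly positive. -/
theorem zero_function_partial_s_pos
    (p q m : ℝ → ℝ) (u u' : ℝ → ℝ → ℝ → ℝ)
    (hp : Continuous p) (hq : Continuous q) (hm : Continuous m)
    (hppos : ∀ t, 0 < p t) (hqnn : ∀ t, 0 ≤ q t)
    (hsol : IsSolFamily p q m u u')
    (hu : Continuous fun x : ℝ × ℝ × ℝ => u x.1 x.2.1 x.2.2)
    (hu' : Continuous fun x : ℝ × ℝ × ℝ => u' x.1 x.2.1 x.2.2) :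
    ∀ a s : ℝ, (zeroSet u a s).Nonempty →
      ∀ d : ℝ, HasDerivAt (fun σ => sInf (zeroSet u a σ)) d s → 0 < d :=
  zero_function_partial_s_pos_general p q m u u' hppos hsol hu hu'
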